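/- arXiv:1404.6067 — 4 statements merged into one kernel-verified Lean document; each statement's English description precedes it below -/
import Mathlib

section
/- If (X, S^M, S^N) and (Y, T^M, T^N) are waves for a pair (M, N) of matroids on a common ground set, then (X ∪ Y, S^M ∪ (T^M \ X), S^N ∪ (T^N \ X)) is also a wave for (M, N). -/
open Matroid Set

variable {α : Type*}

/-- Deletion of a set from a matroid: restriction to the complement. -/
def Matroid.del (M : Matroid α) (D : Set α) : Matroid α := M ↾ (M.E \ D)

/-- Contraction of a set in a matroid, defined by duality. -/
def Matroid.con (M : Matroid α) (C : Set α) : Matroid α := ((M✶.del C))✶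

/-- A circuit: a minimal dependent set. -/
def IsCircuitOf (M : Matroid α) (C : Set α) : Prop := Minimal M.Dep C

/-- A wave for the pair `(M, N)`: disjoint sets `SM, SN ⊆ X` spanning `X`
in the respective restrictions. -/
def IsWave (M N : Matroid α) (X SM SN : Set α) : Prop :=
  SM ⊆ X ∧ SN ⊆ X ∧ X ⊆ M.E ∧ Disjoint SM SN ∧
  (M ↾ X).Spanning SM ∧ (N ↾ X).Spanning SN

/- `S ∪ (T \ X)` spans all of `X`, hence every element of `T`, hence all of `Y`. -/
lemma Matroid.Spanning.restrict_union_diff {M : Matroid α} {X Y S T : Set α}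
    (hS : (M ↾ X).Spanning S) (hT : (M ↾ Y).Spanning T) :
    (M ↾ (X ∪ Y)).Spanning (S ∪ (T \ X)) := by
  rw [restrict_spanning_iff'] at hS hT ⊢
  have hX : X ∩ M.E ⊆ M.closure (S ∪ (T \ X)) :=
    hS.1.trans (M.closure_subset_closure subset_union_left)
  have hT_cl : T ∩ M.E ⊆ M.closure (S ∪ (T \ X)) := fun e ⟨heT, heE⟩ => by
    by_cases heX : e ∈ X
    · exact hX ⟨heX, heE⟩
    · exact mem_closure_of_mem' _ (Or.inr ⟨heT, heX⟩) heE
  have hY : Y ∩ M.E ⊆ M.closure (S ∪ (T \ X)) := by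
    refine hT.1.trans ?_
    rw [← closure_inter_ground]
    exact M.closure_subset_closure_of_subset_closure hT_cl
  refine ⟨?_, union_subset_union hS.2 (sdiff_subset.trans hT.2)⟩
  rw [union_inter_distrib_right]
  exact union_subset hX hY

lemma Set.disjoint_union_diff_union_diff {X S S' T T' : Set α}
    (hS : Disjoint S S') (hT : Disjoint T T') (hSX : S ⊆ X) (hS'X : S' ⊆ X) :
    Disjoint (S ∪ (T \ X)) (S' ∪ (T' \ X)) := by
  refine disjoint_union_left.2 ⟨disjoint_union_right.2 ⟨hS, ?_⟩,
    disjoint_union_right.2 ⟨?_, hT.mono sdiff_subset sdiff_subset⟩⟩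
  · exact disjoint_left.2 fun _ he he' => he'.2 (hSX he)
  · exact disjoint_left.2 fun _ he he' => he.2 (hS'X he')

theorem join_of_waves_general (M N : Matroid α)
    (X SM SN Y TM TN : Set α)
    (hX : IsWave M N X SM SN) (hY : IsWave M N Y TM TN) :
    IsWave M N (X ∪ Y) (SM ∪ (TM \ X)) (SN ∪ (TN \ X)) := by
  obtain ⟨hSMX, hSNX, hXE, hdX, hMX, hNX⟩ := hX
  obtain ⟨hTMY, hTNY, hYE, hdY, hMY, hNY⟩ := hY
  exact ⟨union_subset_union hSMX (sdiff_subset.trans hTMY),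
    union_subset_union hSNX (sdiff_subset.trans hTNY), union_subset hXE hYE,
    disjoint_union_diff_union_diff hdX hdY hSMX hSNX,
    hMX.restrict_union_diff hMY, hNX.restrict_union_diff hNY⟩

/-- The join of two waves is a wave. -/
theorem join_of_waves (M N : Matroid α) (hE : M.E = N.E) (hfin : M.E.Finite)
    (X SM SN Y TM TN : Set α)
    (hX : IsWave M N X SM SN) (hY : IsWave M N Y TM TN) :
    IsWave M N (X ∪ Y) (SM ∪ (TM \ X)) (SN ∪ (TN \ X)) :=
  join_of_waves_general M N X SM SN Y TM TN hX hY
end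

section
/- Let M and N be two matroids on a common finite ground set E, and let e, f ∈ E be distinct. Assume that every nonempty wave for (M, N) contains e. Then in the pair (M/f, N\f), either E − f is (the underlying set of) a cowave, or there is a hindrance focusing on e. -/
open Matroid Set

variable {α : Type*}

/-!
Write `M' = M ／ f` and `N' = N ＼ f`. By Edmonds' partition theorem, `E - f` splits into an
`M'`-independent and an `N'`-independent set unless some `Z ⊆ E - f` is deficient, i.e.
`r_M'(Z) + r_N'(Z) < |Z|`; the complement of the `M'`-part is then a cowave. Otherwise take a
minimal deficient `Y`: splitting `Y - y` for any `y ∈ Y` gives a hindrance focusing on `y`.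
As `r_M ≤ r_M' + 1` and `r_N = r_N'` on `Y`, we get `|Y| ≥ r_M(Y) + r_N(Y)`, which forces a
nonempty `(M, N)`-wave inside `Y`; hence `e ∈ Y`.

The partition theorem is proved by induction, contracting an element in whichever of the two
matroids keeps the rank condition; submodularity shows that one of them does.
-/

lemma Set.Finite.exists_minimal_subset {P : Set α → Prop} {S : Set α} (hS : S.Finite)
    (hP : P S) : ∃ T ⊆ S, Minimal P T := by
  obtain ⟨T, hT⟩ := (hS.finite_subsets.subset fun T (hT : T ⊆ S ∧ P T) ↦ hT.1).exists_minimal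
    ⟨S, subset_rfl, hP⟩
  exact ⟨T, hT.prop.1, hT.prop.2, fun U hU hUT ↦ hT.2 ⟨hUT.trans hT.prop.1, hU⟩ hUT⟩

namespace Matroid

variable {M N : Matroid α} {I J X Y A B C S : Set α} {x y : α}

lemma eRk_contract_add_eRk (M : Matroid α) (hXC : Disjoint X C) :
    (M ／ C).eRk X + M.eRk C = M.eRk (X ∪ C) := by
  obtain ⟨J, hJ⟩ := M.exists_isBasis' C
  obtain ⟨K, hK, hJK⟩ := hJ.indep.subset_isBasis'_of_subset (hJ.subset.trans subset_union_right)
  have hKC : K ∩ C = J := (hJ.eq_of_subset_indep (hK.indep.inter_right C)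
    (subset_inter hJK hJ.subset) inter_subset_right).symm
  have hc := hK.contract_isBasis' hJ (hK.indep.subset (union_subset sdiff_subset hJK))
  rw [union_sdiff_right, hXC.sdiff_eq_left] at hc
  rw [hc.eRk_eq_encard, hJ.eRk_eq_encard, hK.eRk_eq_encard, ← hKC, encard_sdiff_add_encard_inter]

/-- Takes the junk value `0` on sets of infinite rank. -/
noncomputable def rk (M : Matroid α) (X : Set α) : ℕ := (M.eRk X).toNat

lemma rk_delete_of_disjoint (M : Matroid α) {D : Set α} (hXD : Disjoint X D) :
    (M ＼ D).rk X = M.rk X := by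
  rw [rk, rk, delete_eq_restrict, restrict_eRk_eq', ← inter_sdiff_assoc,
    (hXD.mono_left inter_subset_left).sdiff_eq_left, eRk_inter_ground]

section RankFinite

variable [M.RankFinite]

lemma cast_rk_eq (M : Matroid α) [M.RankFinite] (X : Set α) : (M.rk X : ℕ∞) = M.eRk X :=
  ENat.natCast_toNat (M.isRkFinite_set X).eRk_lt_top.ne

lemma rk_mono (hXY : X ⊆ Y) : M.rk X ≤ M.rk Y := by
  rw [← Nat.cast_le (α := ℕ∞), cast_rk_eq, cast_rk_eq]
  exact M.eRk_mono hXY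

lemma rk_inter_add_rk_union_le (M : Matroid α) [M.RankFinite] (X Y : Set α) :
    M.rk (X ∩ Y) + M.rk (X ∪ Y) ≤ M.rk X + M.rk Y := by
  rw [← Nat.cast_le (α := ℕ∞)]
  push_cast
  simp only [cast_rk_eq]
  exact M.eRk_inter_add_eRk_union_le X Y

lemma rk_union_le_rk_add_rk (M : Matroid α) [M.RankFinite] (X Y : Set α) :
    M.rk (X ∪ Y) ≤ M.rk X + M.rk Y := by
  rw [← Nat.cast_le (α := ℕ∞)]
  push_cast
  simp only [cast_rk_eq]
  exact M.eRk_union_le_eRk_add_eRk X Y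

lemma rk_singleton_le (M : Matroid α) [M.RankFinite] (x : α) : M.rk {x} ≤ 1 := by
  rw [← Nat.cast_le (α := ℕ∞), cast_rk_eq]
  exact M.eRk_singleton_le x

lemma rk_singleton_eq_one_iff : M.rk {x} = 1 ↔ M.IsNonloop x := by
  rw [← eRk_singleton_eq_one_iff, ← cast_rk_eq, Nat.cast_eq_one]

lemma rk_contractElem_add_rk (M : Matroid α) [M.RankFinite] (hxX : x ∉ X) :
    (M ／ {x}).rk X + M.rk {x} = M.rk (insert x X) := by
  rw [← Nat.cast_inj (R := ℕ∞)]
  push_cast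
  simp only [cast_rk_eq]
  rw [eRk_contract_add_eRk M (disjoint_singleton_right.2 hxX), union_singleton]

lemma Indep.ncard_le_rk_of_subset (hI : M.Indep I) (hIX : I ⊆ X) : I.ncard ≤ M.rk X := by
  rw [← Nat.cast_le (α := ℕ∞), hI.finite.cast_ncard_eq, cast_rk_eq]
  exact hI.encard_le_eRk_of_subset hIX

lemma Indep.isBasis'_of_rk_le (hI : M.Indep I) (hIX : I ⊆ X) (h : M.rk X ≤ I.ncard) :
    M.IsBasis' I X := by
  refine hI.isBasis'_of_eRk_ge hI.finite hIX ?_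
  rw [hI.eRk_eq_encard, ← hI.finite.cast_ncard_eq, ← cast_rk_eq]
  exact_mod_cast h

end RankFinite

def Deficient (M N : Matroid α) (X : Set α) : Prop := M.rk X + N.rk X < X.ncard

def Partitionable (M N : Matroid α) (S : Set α) : Prop :=
  ∃ I J, M.Indep I ∧ N.Indep J ∧ Disjoint I J ∧ I ∪ J = S

lemma Deficient.nonempty (h : Deficient M N X) : X.Nonempty :=
  nonempty_of_ncard_ne_zero (by unfold Deficient at h; omega)

lemma Partitionable.symm (h : Partitionable M N S) : Partitionable N M S :=
  let ⟨I, J, hI, hJ, hIJ, hS⟩ := h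
  ⟨J, I, hJ, hI, hIJ.symm, union_comm I J ▸ hS⟩

lemma Partitionable.insert_of_contractElem (h : Partitionable (M ／ {x}) N S) (hx : M.IsNonloop x)
    (hxS : x ∉ S) : Partitionable M N (insert x S) := by
  obtain ⟨I, J, hI, hJ, hIJ, rfl⟩ := h
  rw [hx.contractElem_indep_iff] at hI
  have hxJ : x ∉ J := fun hxJ ↦ hxS (subset_union_right hxJ)
  exact ⟨insert x I, J, hI.2, hJ, disjoint_insert_left.2 ⟨hxJ, hIJ⟩, insert_union⟩

section ContractElem

variable [M.RankFinite] [N.RankFinite]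

lemma isNonloop_of_deficient_contractElem (hAfin : A.Finite) (hxA : x ∉ A)
    (hA : Deficient (M ／ {x}) N A) (h : ¬ Deficient M N (insert x A)) : N.IsNonloop x := by
  have hM := M.rk_contractElem_add_rk hxA
  have hN := N.rk_union_le_rk_add_rk A {x}
  rw [union_singleton] at hN
  have := M.rk_singleton_le x
  have := N.rk_singleton_le x
  have := ncard_insert_of_notMem hxA hAfin
  unfold Deficient at hA h
  rw [← rk_singleton_eq_one_iff]
  omega

/-- Submodularity of the ranks at `insert x A` and `B` (in `M`) and at `A` and `insert x B`
(in `N`) shows that `insert x (A ∪ B)` or `A ∩ B` would be deficient. -/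
lemma not_deficient_contractElem_and_deficient_contractElem (hSfin : S.Finite) (hxS : x ∉ S)
    (h : ∀ Z ⊆ insert x S, ¬ Deficient M N Z) (hAS : A ⊆ S) (hBS : B ⊆ S) :
    ¬ (Deficient (M ／ {x}) N A ∧ Deficient (N ／ {x}) M B) := by
  rintro ⟨hA, hB⟩
  have hxA : x ∉ A := fun hx ↦ hxS (hAS hx)
  have hxB : x ∉ B := fun hx ↦ hxS (hBS hx)
  have hAB : A ∪ B ⊆ S := union_subset hAS hBS
  have hMA := M.rk_contractElem_add_rk hxA
  have hNB := N.rk_contractElem_add_rk hxB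
  have hM := M.rk_inter_add_rk_union_le (insert x A) B
  have hN := N.rk_inter_add_rk_union_le A (insert x B)
  rw [insert_inter_of_notMem hxB, insert_union] at hM
  rw [inter_insert_of_notMem hxA, union_insert] at hN
  have hinter := h (A ∩ B) (inter_subset_left.trans (hAS.trans (subset_insert x S)))
  have hunion := h (insert x (A ∪ B)) (insert_subset_insert hAB)
  have := ncard_insert_of_notMem (fun hx ↦ hxS (hAB hx)) (hSfin.subset hAB)
  have := ncard_union_add_ncard_inter A B (hSfin.subset hAS) (hSfin.subset hBS)
  have := M.rk_singleton_le x
  have := N.rk_singleton_le x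
  unfold Deficient at hA hB hinter hunion
  omega

lemma forall_not_deficient_contractElem (hSfin : S.Finite) (hxS : x ∉ S)
    (h : ∀ Z ⊆ insert x S, ¬ Deficient M N Z) :
    (M.IsNonloop x ∧ ∀ Z ⊆ S, ¬ Deficient (M ／ {x}) N Z) ∨
      (N.IsNonloop x ∧ ∀ Z ⊆ S, ¬ Deficient (N ／ {x}) M Z) := by
  have hins : ∀ {A}, A ⊆ S → ¬ Deficient M N (insert x A) :=
    fun hAS ↦ h _ (insert_subset_insert hAS)
  by_cases hMdef : ∃ A ⊆ S, Deficient (M ／ {x}) N A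
  · obtain ⟨A, hAS, hA⟩ := hMdef
    refine .inr ⟨isNonloop_of_deficient_contractElem (hSfin.subset hAS) (fun hx ↦ hxS (hAS hx)) hA
      (hins hAS), fun B hBS hB ↦
      not_deficient_contractElem_and_deficient_contractElem hSfin hxS h hAS hBS ⟨hA, hB⟩⟩
  by_cases hNdef : ∃ B ⊆ S, Deficient (N ／ {x}) M B
  · obtain ⟨B, hBS, hB⟩ := hNdef
    refine .inl ⟨isNonloop_of_deficient_contractElem (hSfin.subset hBS) (fun hx ↦ hxS (hBS hx)) hB
      (fun hd ↦ hins hBS ?_), fun A hAS hA ↦ hMdef ⟨A, hAS, hA⟩⟩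
    unfold Deficient at hd ⊢
    omega
  have hx := h {x} (singleton_subset_iff.2 (mem_insert x S))
  have := M.rk_singleton_le x
  have := N.rk_singleton_le x
  unfold Deficient at hx
  rw [ncard_singleton] at hx
  obtain hM | hN : M.rk {x} = 1 ∨ N.rk {x} = 1 := by omega
  · exact .inl ⟨rk_singleton_eq_one_iff.1 hM, fun A hAS hA ↦ hMdef ⟨A, hAS, hA⟩⟩
  · exact .inr ⟨rk_singleton_eq_one_iff.1 hN, fun B hBS hB ↦ hNdef ⟨B, hBS, hB⟩⟩

end ContractElem

theorem partitionable_of_forall_not_deficient [M.RankFinite] [N.RankFinite] (hS : S.Finite)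
    (h : ∀ Z ⊆ S, ¬ Deficient M N Z) : Partitionable M N S := by
  induction S, hS using Set.Finite.induction_on generalizing M N with
  | empty => exact ⟨∅, ∅, M.empty_indep, N.empty_indep, disjoint_empty _, union_empty _⟩
  | @insert x S hxS hS ih =>
    obtain ⟨hx, hc⟩ | ⟨hx, hc⟩ := forall_not_deficient_contractElem hS hxS h
    · exact (ih hc).insert_of_contractElem hx hxS
    · exact ((ih hc).insert_of_contractElem hx hxS).symm

lemma isWave_of_rk_add_rk_le [M.RankFinite] [N.RankFinite] (hX : X ⊆ M.E) (hI : M.Indep I)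
    (hJ : N.Indep J) (hIJ : Disjoint I J) (hIX : I ⊆ X) (hJX : J ⊆ X)
    (h : M.rk X + N.rk X ≤ I.ncard + J.ncard) : IsWave M N X I J := by
  have := hI.ncard_le_rk_of_subset hIX
  have := hJ.ncard_le_rk_of_subset hJX
  exact ⟨hIX, hJX, hX, hIJ, (isBase_restrict_iff'.2 (hI.isBasis'_of_rk_le hIX (by omega))).spanning,
    (isBase_restrict_iff'.2 (hJ.isBasis'_of_rk_le hJX (by omega))).spanning⟩

lemma exists_isWave_of_minimal_deficient [M.Finite] [N.RankFinite]
    (hY : Minimal (Deficient M N) Y) (hYE : Y ⊆ M.E) (hy : y ∈ Y) :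
    ∃ I J, IsWave M N Y I J ∧ y ∉ I ∧ y ∉ J := by
  have hYfin : Y.Finite := M.ground_finite.subset hYE
  obtain ⟨I, J, hI, hJ, hIJ, hIJY⟩ :=
    partitionable_of_forall_not_deficient (hYfin.subset sdiff_subset) fun Z hZ ↦
      hY.not_prop_of_ssubset (hZ.trans_ssubset (sdiff_singleton_ssubset.2 hy))
  have hcard : I.ncard + J.ncard + 1 = Y.ncard := by
    rw [← ncard_union_eq hIJ hI.finite hJ.finite, hIJY, ncard_sdiff_singleton_add_one hy hYfin]
  have hIY : I ⊆ Y \ {y} := hIJY ▸ subset_union_left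
  have hJY : J ⊆ Y \ {y} := hIJY ▸ subset_union_right
  have hdef := hY.prop
  unfold Deficient at hdef
  exact ⟨I, J, isWave_of_rk_add_rk_le hYE hI hJ hIJ (hIY.trans sdiff_subset)
    (hJY.trans sdiff_subset) (by omega), fun h ↦ (hIY h).2 rfl, fun h ↦ (hJY h).2 rfl⟩

/-- A minimal nonempty `X ⊆ Y` with `M.rk X + N.rk X ≤ X.ncard` has no deficient proper subset:
either `X` is itself (minimally) deficient, or it is partitioned into a wave. -/
lemma exists_nonempty_isWave_of_rk_add_rk_le [M.Finite] [N.RankFinite] (hYE : Y ⊆ M.E)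
    (hY : Y.Nonempty) (h : M.rk Y + N.rk Y ≤ Y.ncard) :
    ∃ X ⊆ Y, X.Nonempty ∧ ∃ I J, IsWave M N X I J := by
  obtain ⟨X, hXY, hX⟩ := (M.ground_finite.subset hYE).exists_minimal_subset
    (P := fun X ↦ X.Nonempty ∧ M.rk X + N.rk X ≤ X.ncard) ⟨hY, h⟩
  have hXE : X ⊆ M.E := hXY.trans hYE
  have hssub : ∀ Z ⊂ X, ¬ Deficient M N Z := fun Z hZX hZ ↦
    hX.not_prop_of_ssubset hZX ⟨hZ.nonempty, hZ.le⟩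
  obtain ⟨x, hx⟩ := hX.prop.1
  refine ⟨X, hXY, ⟨x, hx⟩, ?_⟩
  by_cases hdef : Deficient M N X
  · obtain ⟨I, J, hW, -⟩ := exists_isWave_of_minimal_deficient
      (minimal_iff_forall_ssubset.2 ⟨hdef, hssub⟩) hXE hx
    exact ⟨I, J, hW⟩
  · obtain ⟨I, J, hI, hJ, hIJ, rfl⟩ := partitionable_of_forall_not_deficient
      (M.ground_finite.subset hXE) fun Z hZX ↦ hZX.eq_or_ssubset.elim (· ▸ hdef) (hssub Z)
    refine ⟨I, J, isWave_of_rk_add_rk_le hXE hI hJ hIJ subset_union_left subset_union_right ?_⟩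
    rw [← ncard_union_eq hIJ hI.finite hJ.finite]
    exact hX.prop.2

lemma isWave_dual_of_partition (hE : N.E = M.E) (hI : M.Indep I) (hJ : N.Indep J)
    (hIJ : Disjoint I J) (hIJE : I ∪ J = M.E) : IsWave M✶ N✶ M.E (M.E \ I) I := by
  have hJI : N.E \ J = I := by rw [hE, ← hIJE, union_sdiff_right, hIJ.sdiff_eq_left]
  refine ⟨sdiff_subset, hIJE ▸ subset_union_left, subset_rfl, disjoint_sdiff_left, ?_, ?_⟩
  · rw [← M.dual_ground, restrict_ground_eq_self]
    exact (dual_coindep_iff.2 hI).compl_spanning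
  · rw [← hE, ← N.dual_ground, restrict_ground_eq_self, ← hJI]
    exact (dual_coindep_iff.2 hJ).compl_spanning

end Matroid

theorem cowave_or_hindrance_focus_general (M N : Matroid α) (hE : M.E = N.E) (hfin : M.E.Finite)
    (e f : α) (hyp : ∀ X SM SN, IsWave M N X SM SN → X.Nonempty → e ∈ X) :
    (∃ TM TN, IsWave (M.con {f})✶ (N.del {f})✶ (M.E \ {f}) TM TN) ∨
    (∃ X SM SN, IsWave (M.con {f}) (N.del {f}) X SM SN ∧ e ∈ X ∧ e ∉ SM ∧ e ∉ SN) := by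
  have : M.Finite := ⟨hfin⟩
  have : N.Finite := ⟨hE ▸ hfin⟩
  by_cases hdef : ∃ Z ⊆ M.E \ {f}, Deficient (M ／ {f}) (N ＼ {f}) Z
  · obtain ⟨Z, hZE, hZ⟩ := hdef
    obtain ⟨Y, hYZ, hY⟩ := (hfin.subset (hZE.trans sdiff_subset)).exists_minimal_subset hZ
    have hYE : Y ⊆ M.E \ {f} := hYZ.trans hZE
    have heY : e ∈ Y := by
      have hfY : f ∉ Y := fun h ↦ (hYE h).2 rfl
      have hM := M.rk_contractElem_add_rk hfY
      have hN := N.rk_delete_of_disjoint (disjoint_singleton_right.2 hfY)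
      have := M.rk_mono (subset_insert f Y)
      have := M.rk_singleton_le f
      have hdefY := hY.prop
      unfold Deficient at hdefY
      obtain ⟨X, hXY, hX, I, J, hW⟩ := exists_nonempty_isWave_of_rk_add_rk_le
        (hYE.trans sdiff_subset) hY.prop.nonempty (N := N) (by omega)
      exact hXY (hyp X I J hW hX)
    obtain ⟨I, J, hW, heI, heJ⟩ := exists_isWave_of_minimal_deficient hY hYE heY
    exact .inr ⟨Y, I, J, hW, heY, heI, heJ⟩
  · push Not at hdef
    have hE' : (N ＼ {f}).E = (M ／ {f}).E := by rw [delete_ground, contract_ground, hE]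
    obtain ⟨I, J, hI, hJ, hIJ, hIJE⟩ :=
      partitionable_of_forall_not_deficient (hfin.subset sdiff_subset) hdef
    exact .inl ⟨_, _, isWave_dual_of_partition hE' hI hJ hIJ hIJE⟩

/-- If every nonempty wave for `(M, N)` contains `e`, then in `(M/f, N\f)`
either `E - f` is a cowave or there is a hindrance focusing on `e`. -/
theorem cowave_or_hindrance_focus (M N : Matroid α) (hE : M.E = N.E) (hfin : M.E.Finite)
    (e f : α) (he : e ∈ M.E) (hf : f ∈ M.E) (hef : e ≠ f)
    (hyp : ∀ X SM SN, IsWave M N X SM SN → X.Nonempty → e ∈ X) :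
    (∃ TM TN, IsWave (M.con {f})✶ (N.del {f})✶ (M.E \ {f}) TM TN) ∨
    (∃ X SM SN, IsWave (M.con {f}) (N.del {f}) X SM SN ∧ e ∈ X ∧ e ∉ SM ∧ e ∉ SN) :=
  cowave_or_hindrance_focus_general M N hE hfin e f hyp
end

section
/- Define a partial order ≥ on the promise set P = {⊥, M_-, M_+, N_-, N_+, ⊤} by: P ≥ Q iff for every arena (pair of finite matroids with a distinguished element e), whenever some wave fulfils P, some wave also fulfils Q. Then ≥ is exactly the partial order generated by the relations ⊤ ≥ M_+, ⊤ ≥ N_+, M_+ ≥ M_-, N_+ ≥ N_-, M_- ≥ ⊥, N_- ≥ ⊥. In particular, M_+ > M_-, N_+ > N_-, each of M_-, M_+ is incomparable to each of N_-, N_+, ⊤ is the maximum and ⊥ the minimum. -/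
open Matroid Set

variable {α : Type*}

/-- The set of promises `{⊥, M₋, M₊, N₋, N₊, ⊤}`. -/
inductive Promise : Type
  | bot | Mm | Mp | Nm | Np | top
  deriving DecidableEq

/-- The partial order on promises generated by `⊤ ≥ M₊ ≥ M₋ ≥ ⊥` and `⊤ ≥ N₊ ≥ N₋ ≥ ⊥`. -/
def ple : Promise → Promise → Prop
  | Promise.bot, _ => True
  | _, Promise.top => True
  | Promise.Mm, Promise.Mm => True
  | Promise.Mm, Promise.Mp => True
  | Promise.Mp, Promise.Mp => True
  | Promise.Nm, Promise.Nm => True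
  | Promise.Nm, Promise.Np => True
  | Promise.Np, Promise.Np => True
  | _, _ => False

/-- Promises and co-promises: `Sum.inl` is a promise, `Sum.inr` a co-promise. -/
abbrev PP := Promise ⊕ Promise

/-- The order on promises and co-promises: the orders on the two copies, with no
comparabilities between promises and co-promises. -/
def pple : PP → PP → Prop
  | Sum.inl p, Sum.inl q => ple p q
  | Sum.inr p, Sum.inr q => ple p q
  | _, _ => False

/-- Up-closed subsets of `PP`. -/
def UpClosed (B : Set PP) : Prop := ∀ x ∈ B, ∀ y, pple x y → y ∈ B

/-- The five possible attainability sets. -/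
def attainSet1 : Set PP := Sum.inl '' Set.univ ∪ {Sum.inr Promise.bot}
def attainSet2 : Set PP := Sum.inr '' Set.univ ∪ {Sum.inl Promise.bot}
def attainSet3 : Set PP :=
  {Sum.inl Promise.bot, Sum.inl Promise.Mm, Sum.inl Promise.Mp,
   Sum.inr Promise.bot, Sum.inr Promise.Nm, Sum.inr Promise.Np}
def attainSet4 : Set PP :=
  {Sum.inl Promise.bot, Sum.inl Promise.Nm, Sum.inl Promise.Np,
   Sum.inr Promise.bot, Sum.inr Promise.Mm, Sum.inr Promise.Mp}
def attainSet5 : Set PP :=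
  {Sum.inl Promise.bot, Sum.inl Promise.Mm, Sum.inl Promise.Nm,
   Sum.inr Promise.bot, Sum.inr Promise.Mm, Sum.inr Promise.Nm}

/-- A set of promises and co-promises is blocking if it meets each of the five
possible attainability sets. -/
def Blocking (B : Set PP) : Prop :=
  (B ∩ attainSet1).Nonempty ∧ (B ∩ attainSet2).Nonempty ∧ (B ∩ attainSet3).Nonempty ∧
  (B ∩ attainSet4).Nonempty ∧ (B ∩ attainSet5).Nonempty

/-- A wave `(W, SM, SN)` fulfils a promise at `e` in the arena given by `(M, N, e)`. -/
def Fulfils (M N : Matroid α) (e : α) (W SM SN : Set α) : Promise → Prop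
  | Promise.bot => True
  | Promise.Mp => e ∉ W ∧ e ∈ M.closure W
  | Promise.Mm => IsWave M N (insert e W) SM (insert e SN)
  | Promise.Np => e ∉ W ∧ e ∈ N.closure W
  | Promise.Nm => IsWave M N (insert e W) (insert e SM) SN
  | Promise.top => e ∉ W ∧ e ∈ M.closure W ∧ e ∈ N.closure W

/-- A promise is attainable in the arena `(M, N, e)` if some wave fulfils it. -/
def Attains (M N : Matroid α) (e : α) (P : Promise) : Prop :=
  ∃ W SM SN, IsWave M N W SM SN ∧ Fulfils M N e W SM SN P

/-- The set of attainable promises (`Sum.inl`) and co-promises (`Sum.inr`,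
attainable by cowaves, i.e. waves of the dual pair) of the arena `(M, N, e)`. -/
def AttainSet (M N : Matroid α) (e : α) : Set PP :=
  fun x => Sum.elim (Attains M N e) (Attains M✶ N✶ e) x

universe u

/-- The domination order on promises: `P ≥ Q` iff in every finite arena, whenever
some wave fulfils `P`, some wave also fulfils `Q`. -/
def PromiseGe (P Q : Promise) : Prop :=
  ∀ (β : Type u) (M N : Matroid β) (e : β),
    M.E = N.E → M.E.Finite → e ∈ M.E → Attains M N e P → Attains M N e Q

/-! Attainability is antitone along `ple`: a wave fulfilling `⊤` fulfils `M₊` and `N₊`, and a wave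
`(W, S^M, S^N)` fulfilling `M₊` gives the wave `(W + e, S^M, S^N + e)` fulfilling `M₋`, because
`e` is spanned by `W` and hence by `S^M`. Conversely, the attainable promises of four small arenas
are exactly `↓⊥` (`e` a coloop of `M` and `N`), `↓M₊` (`e` a loop of `M`, a coloop of `N`), `↓N₊`,
and `↓M₋ ∪ ↓N₋` (`M = N` the parallel pair on `{e, f}`), and these four down-sets separate any
two promises. -/

section Waves

variable {M N : Matroid α} {X W SM SN : Set α} {e : α}

lemma isWave_empty (M N : Matroid α) : IsWave M N ∅ ∅ ∅ :=
  ⟨subset_rfl, subset_rfl, empty_subset _, disjoint_empty _, (M ↾ ∅).ground_spanning,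
    (N ↾ ∅).ground_spanning⟩

lemma IsWave.swap (h : IsWave M N X SM SN) (hE : M.E = N.E) : IsWave N M X SN SM :=
  ⟨h.2.1, h.1, hE ▸ h.2.2.1, h.2.2.2.1.symm, h.2.2.2.2.2, h.2.2.2.2.1⟩

lemma IsWave.insert_of_mem_closure (h : IsWave M N W SM SN) (heW : e ∉ W)
    (he : e ∈ M.closure W) : IsWave M N (insert e W) SM (insert e SN) := by
  obtain ⟨hSM, hSN, hWE, hdisj, hMspan, hNspan⟩ := h
  rw [restrict_spanning_iff', inter_eq_left.2 hWE] at hMspan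
  rw [restrict_spanning_iff'] at hNspan
  refine ⟨hSM.trans (subset_insert _ _), insert_subset_insert hSN,
    insert_subset (M.closure_subset_ground W he) hWE,
    disjoint_insert_right.2 ⟨fun heS ↦ heW (hSM heS), hdisj⟩, ?_, ?_⟩
  · rw [restrict_spanning_iff']
    refine ⟨inter_subset_left.trans (insert_subset ?_ hMspan.1), hSM.trans (subset_insert _ _)⟩
    exact M.closure_subset_closure_of_subset_closure hMspan.1 he
  · refine restrict_spanning_iff'.2 ⟨?_, insert_subset_insert hSN⟩
    rintro x ⟨rfl | hxW, hxE⟩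
    · exact N.mem_closure_of_mem' (mem_insert x SN) hxE
    · exact N.closure_subset_closure (subset_insert e SN) (hNspan.1 ⟨hxW, hxE⟩)

end Waves

section Attains

variable {M N : Matroid α} {e : α} {P Q : Promise}

lemma attains_bot (M N : Matroid α) (e : α) : Attains M N e .bot :=
  ⟨∅, ∅, ∅, isWave_empty M N, trivial⟩

lemma Attains.mp_of_top (h : Attains M N e .top) : Attains M N e .Mp :=
  let ⟨W, SM, SN, hw, heW, heM, _⟩ := h
  ⟨W, SM, SN, hw, heW, heM⟩

lemma Attains.np_of_top (h : Attains M N e .top) : Attains M N e .Np :=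
  let ⟨W, SM, SN, hw, heW, _, heN⟩ := h
  ⟨W, SM, SN, hw, heW, heN⟩

lemma Attains.mm_of_mp (h : Attains M N e .Mp) : Attains M N e .Mm :=
  let ⟨W, SM, SN, hw, heW, he⟩ := h
  ⟨W, SM, SN, hw, hw.insert_of_mem_closure heW he⟩

lemma Attains.nm_of_np (hE : M.E = N.E) (h : Attains M N e .Np) : Attains M N e .Nm :=
  let ⟨W, SM, SN, hw, heW, he⟩ := h
  ⟨W, SM, SN, hw, ((hw.swap hE).insert_of_mem_closure heW he).swap hE.symm⟩

lemma Attains.of_ple (hE : M.E = N.E) (h : Attains M N e P) (hQP : ple Q P) :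
    Attains M N e Q := by
  cases P <;> cases Q <;> first
    | exact attains_bot M N e
    | exact h
    | exact hQP.elim
    | exact h.mm_of_mp
    | exact h.nm_of_np hE
    | exact h.mp_of_top
    | exact h.np_of_top
    | exact h.mp_of_top.mm_of_mp
    | exact h.np_of_top.nm_of_np hE

lemma attains_mp_of_isLoop (he : M.IsLoop e) : Attains M N e .Mp :=
  ⟨∅, ∅, ∅, isWave_empty M N, notMem_empty e, he.mem_closure ∅⟩

lemma attains_np_of_isLoop (he : N.IsLoop e) : Attains M N e .Np :=
  ⟨∅, ∅, ∅, isWave_empty M N, notMem_empty e, he.mem_closure ∅⟩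

lemma not_attains_mm_of_isColoop (he : M.IsColoop e) : ¬ Attains M N e .Mm := by
  rintro ⟨W, SM, SN, -, -, -, -, hdisj, hMspan, -⟩
  have heSM : e ∈ SM := he.mem_of_mem_closure
    ((restrict_spanning_iff'.1 hMspan).1 ⟨mem_insert e W, he.mem_ground⟩)
  exact hdisj.notMem_of_mem_left heSM (mem_insert e SN)

lemma not_attains_nm_of_isColoop (he : N.IsColoop e) : ¬ Attains M N e .Nm := by
  rintro ⟨W, SM, SN, -, -, -, -, hdisj, -, hNspan⟩
  have heSN : e ∈ SN := he.mem_of_mem_closure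
    ((restrict_spanning_iff'.1 hNspan).1 ⟨mem_insert e W, he.mem_ground⟩)
  exact hdisj.notMem_of_mem_right heSN (mem_insert e SM)

lemma attains_iff_ple_bot (hE : M.E = N.E) (hM : M.IsColoop e) (hN : N.IsColoop e) :
    Attains M N e P ↔ ple P .bot := by
  refine ⟨fun h ↦ ?_, fun h ↦ (attains_bot M N e).of_ple hE h⟩
  cases P <;> first
    | trivial
    | exact (not_attains_mm_of_isColoop hM (h.of_ple hE trivial)).elim
    | exact (not_attains_nm_of_isColoop hN (h.of_ple hE trivial)).elim

lemma attains_iff_ple_mp (hE : M.E = N.E) (hM : M.IsLoop e) (hN : N.IsColoop e) :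
    Attains M N e P ↔ ple P .Mp := by
  refine ⟨fun h ↦ ?_, fun h ↦ (attains_mp_of_isLoop hM).of_ple hE h⟩
  cases P <;> first
    | trivial
    | exact (not_attains_nm_of_isColoop hN (h.of_ple hE trivial)).elim

lemma attains_iff_ple_np (hE : M.E = N.E) (hM : M.IsColoop e) (hN : N.IsLoop e) :
    Attains M N e P ↔ ple P .Np := by
  refine ⟨fun h ↦ ?_, fun h ↦ (attains_np_of_isLoop hN).of_ple hE h⟩
  cases P <;> first
    | trivial
    | exact (not_attains_mm_of_isColoop hM (h.of_ple hE trivial)).elim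

end Attains

section ParallelPair

variable {a b x : α} {X W SM SN : Set α}

/-- The rank-one matroid on `{a, b}` in which `a` and `b` are parallel: pulling back the free
matroid on a point along a constant map makes all elements parallel. -/
def parallelPair (a b : α) : Matroid α :=
  ((freeOn univ : Matroid Unit).comap fun _ ↦ ()) ↾ {a, b}

@[simp] lemma parallelPair_ground : (parallelPair a b).E = {a, b} := rfl

lemma mem_closure_parallelPair_iff :
    x ∈ (parallelPair a b).closure X ↔ x ∈ ({a, b} : Set α) ∧ (X ∩ {a, b}).Nonempty := by
  simp [parallelPair, and_comm, Set.Nonempty]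

lemma isWave_parallelPair (hab : a ≠ b) :
    IsWave (parallelPair a b) (parallelPair a b) {a, b} {a} {b} := by
  refine ⟨by simp, by simp, subset_rfl, disjoint_singleton.2 hab, ?_, ?_⟩ <;>
  · refine restrict_spanning_iff'.2 ⟨fun x hx ↦ ?_, by simp⟩
    exact mem_closure_parallelPair_iff.2 ⟨hx.1, by simp⟩

lemma IsWave.notMem_closure_parallelPair
    (hw : IsWave (parallelPair a b) (parallelPair a b) W SM SN) (haW : a ∉ W) :
    a ∉ (parallelPair a b).closure W := by
  obtain ⟨hSM, hSN, hWE, hdisj, hMspan, hNspan⟩ := hw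
  have mem_of_nonempty : ∀ S ⊆ W, (S ∩ {a, b}).Nonempty → b ∈ S := by
    rintro S hS ⟨x, hxS, rfl | rfl⟩
    exacts [(haW (hS hxS)).elim, hxS]
  have spanned : ∀ S, (parallelPair a b ↾ W).Spanning S → S ⊆ W → b ∈ W → b ∈ S :=
    fun S hS hSW hbW ↦ mem_of_nonempty S hSW (mem_closure_parallelPair_iff.1
      ((restrict_spanning_iff'.1 hS).1 ⟨hbW, by simp⟩)).2
  intro ha
  have hbW := mem_of_nonempty W subset_rfl (mem_closure_parallelPair_iff.1 ha).2
  exact hdisj.notMem_of_mem_left (spanned SM hMspan hSM hbW) (spanned SN hNspan hSN hbW)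

lemma attains_parallelPair_iff (hab : a ≠ b) {P : Promise} :
    Attains (parallelPair a b) (parallelPair a b) a P ↔ ple P .Mm ∨ ple P .Nm := by
  have hw := isWave_parallelPair hab
  have hmm : Attains (parallelPair a b) (parallelPair a b) a .Mm :=
    ⟨_, _, _, hw.swap rfl, by simpa [Fulfils] using hw.swap rfl⟩
  have hnm : Attains (parallelPair a b) (parallelPair a b) a .Nm :=
    ⟨_, _, _, hw, by simpa [Fulfils] using hw⟩
  have hmp : ¬ Attains (parallelPair a b) (parallelPair a b) a .Mp :=
    fun ⟨_, _, _, hW, haW, ha⟩ ↦ hW.notMem_closure_parallelPair haW ha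
  have hnp : ¬ Attains (parallelPair a b) (parallelPair a b) a .Np := hmp
  refine ⟨fun h ↦ ?_, ?_⟩
  · cases P <;> first
      | exact Or.inl trivial
      | exact Or.inr trivial
      | exact (hmp h).elim
      | exact (hnp h).elim
      | exact (hmp (h.of_ple rfl trivial)).elim
  · rintro (h | h)
    exacts [hmm.of_ple rfl h, hnm.of_ple rfl h]

end ParallelPair

lemma ple_of_forall_downset {P Q : Promise} (hbot : ple P .bot → ple Q .bot)
    (hmp : ple P .Mp → ple Q .Mp) (hnp : ple P .Np → ple Q .Np)
    (hmm : ple P .Mm ∨ ple P .Nm → ple Q .Mm ∨ ple Q .Nm) : ple Q P := by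
  cases P <;> cases Q <;> simp_all [ple]

/-- The domination order on promises is exactly the partial order generated by
`⊤ ≥ M₊ ≥ M₋ ≥ ⊥` and `⊤ ≥ N₊ ≥ N₋ ≥ ⊥`. -/
theorem promiseGe_iff_ple (P Q : Promise) : PromiseGe.{u} P Q ↔ ple Q P := by
  refine ⟨fun h ↦ ?_, fun h _ _ _ _ hE _ _ hP ↦ hP.of_ple hE h⟩
  obtain ⟨a, b, hab⟩ : ∃ a b : ULift.{u} Bool, a ≠ b := ⟨⟨false⟩, ⟨true⟩, by simp⟩
  have hloop : (loopyOn {a}).IsLoop a := loopyOn_isLoop_iff.2 rfl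
  have hcoloop : (freeOn {a}).IsColoop a := hloop.dual_isColoop
  have hE : (loopyOn {a}).E = (freeOn {a}).E := rfl
  have hfin : ({a} : Set _).Finite := finite_singleton a
  refine ple_of_forall_downset ?_ ?_ ?_ ?_
  · simpa only [attains_iff_ple_bot rfl hcoloop hcoloop] using
      h _ (freeOn {a}) (freeOn {a}) a rfl hfin rfl
  · simpa only [attains_iff_ple_mp hE hloop hcoloop] using
      h _ (loopyOn {a}) (freeOn {a}) a hE hfin rfl
  · simpa only [attains_iff_ple_np hE.symm hcoloop hloop] using
      h _ (freeOn {a}) (loopyOn {a}) a hE.symm hfin rfl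
  · simpa only [attains_parallelPair_iff hab] using
      h _ (parallelPair a b) (parallelPair a b) a rfl (toFinite _) (mem_insert a {b})
end

section
/- Let γ̄_{M_+}, γ̄_{N_-} ⊆ P − ⊥ and γ̄_{⊤*} ⊆ P* − ⊥* be up-closed sets whose union γ̄ is blocking. Then at least one of the following holds: (1) one of the six sets {M_+, M_-^*}, {M_-, M_+^*}, {N_+, N_-^*}, {N_-, N_+^*}, {M_-, N_+, ⊤*}, {M_+^*, N_-^*, ⊤} is a subset of γ̄; (2) {M_+, N_-, ⊤*} ⊆ γ̄ and γ̄_{M_+} meets {M_+, N_-}; (3) ⊤ ∈ γ̄_{M_+} and {M_-^*, N_+^*} ⊆ γ̄_{⊤*}; (4) γ̄_{M_+} ⊆ {⊤, N_+} and γ̄_{N_-} = {⊤, M_+, N_+, N_-} and ⊤* ∈ γ̄_{⊤*} ⊆ {⊤*, M_+^*}; (5) γ̄_{M_+} = ∅ and ⊤ ∈ γ̄_{N_-} ⊆ {⊤, N_+} and γ̄_{⊤*} = {⊤*, M_+^*, M_-^*, N_+^*}. -/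
open Promise

/-! Since `⊥ ∉ γ̄` and `⊥* ∉ γ̄`, and up-closed sets containing anything contain the top,
being blocking says exactly: `⊤, ⊤* ∈ γ̄`; `M₊ ∈ γ̄` or `N₊* ∈ γ̄`; `N₊ ∈ γ̄` or `M₊* ∈ γ̄`;
and one of `M₋, N₋, M₋*, N₋*` lies in `γ̄`. Assume none of the six sets of (1) lies in `γ̄`.
Then `M₋ ∉ γ̄` and `N₋* ∉ γ̄`. If `N₋ ∈ γ̄`, these constraints force
`γ̄ ∩ P = {⊤, M₊, N₊, N₋}` and `γ̄ ∩ P* ⊆ {⊤*, M₊*}`, which gives (2) or (4) according to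
whether `γ̄_{M₊}` meets `{M₊, N₋}`; if `M₋* ∈ γ̄`, they force `γ̄ ∩ P ⊆ {⊤, N₊}` and
`γ̄ ∩ P* = {⊤*, M₊*, M₋*, N₊*}`, which gives (3) or (5) according to whether `⊤ ∈ γ̄_{M₊}`. -/

theorem ple_top (p : Promise) : ple p top := by
  cases p <;> trivial

def IsUpClosed (s : Set Promise) : Prop := ∀ p ∈ s, ∀ q, ple p q → q ∈ s

namespace IsUpClosed

variable {s t : Set Promise}

theorem union (hs : IsUpClosed s) (ht : IsUpClosed t) : IsUpClosed (s ∪ t) := by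
  rintro p (hp | hp) q hpq
  exacts [Or.inl (hs p hp q hpq), Or.inr (ht p hp q hpq)]

theorem top_mem (hs : IsUpClosed s) {p : Promise} (hp : p ∈ s) : top ∈ s :=
  hs p hp top (ple_top p)

theorem Mp_mem (hs : IsUpClosed s) (h : Mm ∈ s) : Mp ∈ s := hs Mm h Mp trivial

theorem Np_mem (hs : IsUpClosed s) (h : Nm ∈ s) : Np ∈ s := hs Nm h Np trivial

theorem eq_empty_of_top_notMem (hs : IsUpClosed s) (h : top ∉ s) : s = ∅ :=
  Set.eq_empty_of_forall_notMem fun _ hp => h (hs.top_mem hp)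

theorem eq_of_Mp_mem_of_Nm_mem (hs : IsUpClosed s) (hMp : Mp ∈ s) (hNm : Nm ∈ s)
    (hsub : s ⊆ {top, Mp, Np, Nm}) : s = {top, Mp, Np, Nm} := by
  refine hsub.antisymm ?_
  rintro p (rfl | rfl | rfl | rfl)
  exacts [hs.top_mem hMp, hMp, hs.Np_mem hNm, hNm]

end IsUpClosed

theorem inl_image_union_inr_image_inter_nonempty_iff {γ T : Set Promise} {S : Set PP} :
    ((Sum.inl '' γ ∪ Sum.inr '' T) ∩ S).Nonempty ↔
      (∃ p ∈ γ, Sum.inl p ∈ S) ∨ (∃ p ∈ T, Sum.inr p ∈ S) := by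
  simp only [Set.Nonempty, Set.mem_inter_iff, Set.mem_union, Set.mem_image]
  aesop

section Blocking

variable {γ T : Set Promise}

theorem Blocking.top_mem_left (hbT : bot ∉ T) (hγ : IsUpClosed γ)
    (h : Blocking (Sum.inl '' γ ∪ Sum.inr '' T)) : top ∈ γ := by
  rcases inl_image_union_inr_image_inter_nonempty_iff.1 h.1 with ⟨p, hp, -⟩ | ⟨p, hp, hS⟩
  · exact hγ.top_mem hp
  · cases p <;> simp_all [attainSet1]

theorem Blocking.top_mem_right (hbγ : bot ∉ γ) (hT : IsUpClosed T)
    (h : Blocking (Sum.inl '' γ ∪ Sum.inr '' T)) : top ∈ T := by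
  rcases inl_image_union_inr_image_inter_nonempty_iff.1 h.2.1 with ⟨p, hp, hS⟩ | ⟨p, hp, -⟩
  · cases p <;> simp_all [attainSet2]
  · exact hT.top_mem hp

theorem Blocking.Mp_mem_or_Np_mem (hbγ : bot ∉ γ) (hbT : bot ∉ T)
    (hγ : IsUpClosed γ) (hT : IsUpClosed T) (h : Blocking (Sum.inl '' γ ∪ Sum.inr '' T)) :
    Mp ∈ γ ∨ Np ∈ T := by
  rcases inl_image_union_inr_image_inter_nonempty_iff.1 h.2.2.1 with ⟨p, hp, hS⟩ | ⟨p, hp, hS⟩ <;>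
    cases p <;> simp_all [attainSet3, hγ.Mp_mem, hT.Np_mem]

theorem Blocking.Np_mem_or_Mp_mem (hbγ : bot ∉ γ) (hbT : bot ∉ T)
    (hγ : IsUpClosed γ) (hT : IsUpClosed T) (h : Blocking (Sum.inl '' γ ∪ Sum.inr '' T)) :
    Np ∈ γ ∨ Mp ∈ T := by
  rcases inl_image_union_inr_image_inter_nonempty_iff.1 h.2.2.2.1 with ⟨p, hp, hS⟩ | ⟨p, hp, hS⟩ <;>
    cases p <;> simp_all [attainSet4, hγ.Np_mem, hT.Mp_mem]

theorem Blocking.Mm_mem_or_Nm_mem (hbγ : bot ∉ γ) (hbT : bot ∉ T)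
    (h : Blocking (Sum.inl '' γ ∪ Sum.inr '' T)) :
    Mm ∈ γ ∨ Nm ∈ γ ∨ Mm ∈ T ∨ Nm ∈ T := by
  rcases inl_image_union_inr_image_inter_nonempty_iff.1 h.2.2.2.2 with ⟨p, hp, hS⟩ | ⟨p, hp, hS⟩ <;>
    cases p <;> simp_all [attainSet5]

end Blocking

theorem blocking_union_cases {γ T : Set Promise} (hbγ : bot ∉ γ) (hbT : bot ∉ T)
    (hγ : IsUpClosed γ) (hT : IsUpClosed T) (h : Blocking (Sum.inl '' γ ∪ Sum.inr '' T)) :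
    ((Mp ∈ γ ∧ Mm ∈ T) ∨ (Mm ∈ γ ∧ Mp ∈ T) ∨ (Np ∈ γ ∧ Nm ∈ T) ∨ (Nm ∈ γ ∧ Np ∈ T) ∨
      (Mm ∈ γ ∧ Np ∈ γ ∧ top ∈ T) ∨ (Mp ∈ T ∧ Nm ∈ T ∧ top ∈ γ)) ∨
    (top ∈ γ ∧ γ ⊆ {top, Np} ∧ T = {top, Mp, Mm, Np}) ∨
    (γ = {top, Mp, Np, Nm} ∧ top ∈ T ∧ T ⊆ {top, Mp}) := by
  have hγtop := h.top_mem_left hbT hγ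
  have hTtop := h.top_mem_right hbγ hT
  have hMp_or_Np := h.Mp_mem_or_Np_mem hbγ hbT hγ hT
  have hNp_or_Mp := h.Np_mem_or_Mp_mem hbγ hbT hγ hT
  by_cases hpair : (Mp ∈ γ ∧ Mm ∈ T) ∨ (Mm ∈ γ ∧ Mp ∈ T) ∨ (Np ∈ γ ∧ Nm ∈ T) ∨
      (Nm ∈ γ ∧ Np ∈ T) ∨ (Mm ∈ γ ∧ Np ∈ γ ∧ top ∈ T) ∨ (Mp ∈ T ∧ Nm ∈ T ∧ top ∈ γ)
  · exact Or.inl hpair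
  simp only [not_or, not_and] at hpair
  obtain ⟨hMpMm, hMmMp, hNpNm, hNmNp, hMmNp, hMpNm⟩ := hpair
  have hMmγ : Mm ∉ γ := fun hMm =>
    hMmNp hMm (hNp_or_Mp.resolve_right (hMmMp hMm)) hTtop
  have hNmT : Nm ∉ T := fun hNm =>
    hMpNm (hNp_or_Mp.resolve_left fun hNp => hNpNm hNp hNm) hNm hγtop
  rcases h.Mm_mem_or_Nm_mem hbγ hbT with hMm | hNm | hMm | hNm
  · exact absurd hMm hMmγ
  · have hNpT := hNmNp hNm
    have hMp := hMp_or_Np.resolve_right hNpT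
    have hMmT := hMpMm hMp
    refine Or.inr (Or.inr ⟨?_, hTtop, ?_⟩)
    · ext p; cases p <;> simp [hbγ, hMmγ, hMp, hγ.Np_mem hNm, hNm, hγtop]
    · intro p hp; cases p <;> simp [hbT, hMmT, hNmT, hNpT] at hp ⊢
  · have hMpT := hT.Mp_mem hMm
    have hMpγ : Mp ∉ γ := fun hMp => hMpMm hMp hMm
    have hNpT := hMp_or_Np.resolve_left hMpγ
    have hNmγ : Nm ∉ γ := fun hNm => hNmNp hNm hNpT
    refine Or.inr (Or.inl ⟨hγtop, ?_, ?_⟩)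
    · intro p hp; cases p <;> simp [hbγ, hMmγ, hMpγ, hNmγ] at hp ⊢
    · ext p; cases p <;> simp [hbT, hNmT, hTtop, hMpT, hMm, hNpT]
  · exact absurd hNm hNmT

/-- `gM`, `gN`, `gT` stand for `γ̄_{M₊}`, `γ̄_{N₋}`, `γ̄_{⊤*}` (the last as a set of unstarred
promises), so that `γ̄ = Sum.inl '' (gM ∪ gN) ∪ Sum.inr '' gT`. -/
theorem blocking_union_cases_plus (gM gN gT : Set Promise)
    (hbM : bot ∉ gM) (hbN : bot ∉ gN) (hbT : bot ∉ gT)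
    (hupM : ∀ p ∈ gM, ∀ q, ple p q → q ∈ gM)
    (hupN : ∀ p ∈ gN, ∀ q, ple p q → q ∈ gN)
    (hupT : ∀ p ∈ gT, ∀ q, ple p q → q ∈ gT)
    (hblock : Blocking (Sum.inl '' (gM ∪ gN) ∪ Sum.inr '' gT)) :
    -- (1) one of the six listed sets is a subset of γ̄
    ((Mp ∈ gM ∪ gN ∧ Mm ∈ gT) ∨ (Mm ∈ gM ∪ gN ∧ Mp ∈ gT) ∨
     (Np ∈ gM ∪ gN ∧ Nm ∈ gT) ∨ (Nm ∈ gM ∪ gN ∧ Np ∈ gT) ∨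
     (Mm ∈ gM ∪ gN ∧ Np ∈ gM ∪ gN ∧ top ∈ gT) ∨
     (Mp ∈ gT ∧ Nm ∈ gT ∧ top ∈ gM ∪ gN)) ∨
    -- (2) {M₊, N₋, ⊤*} ⊆ γ̄ and γ̄_{M₊} meets {M₊, N₋}
    ((Mp ∈ gM ∪ gN ∧ Nm ∈ gM ∪ gN ∧ top ∈ gT) ∧ (Mp ∈ gM ∨ Nm ∈ gM)) ∨
    -- (3) ⊤ ∈ γ̄_{M₊} and {M₋*, N₊*} ⊆ γ̄_{⊤*}
    (top ∈ gM ∧ Mm ∈ gT ∧ Np ∈ gT) ∨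
    -- (4)
    (gM ⊆ ({top, Np} : Set Promise) ∧ gN = ({top, Mp, Np, Nm} : Set Promise) ∧
      top ∈ gT ∧ gT ⊆ ({top, Mp} : Set Promise)) ∨
    -- (5)
    (gM = ∅ ∧ top ∈ gN ∧ gN ⊆ ({top, Np} : Set Promise) ∧
      gT = ({top, Mp, Mm, Np} : Set Promise)) := by
  have hupγ : IsUpClosed (gM ∪ gN) := IsUpClosed.union hupM hupN
  have hbγ : bot ∉ gM ∪ gN := fun h => h.elim hbM hbN
  rcases blocking_union_cases hbγ hbT hupγ hupT hblock with
    hpair | ⟨hγtop, hγsub, hT⟩ | ⟨hγ, hTtop, hTsub⟩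
  · exact Or.inl hpair
  · by_cases htop : top ∈ gM
    · exact Or.inr (Or.inr (Or.inl ⟨htop, by simp [hT], by simp [hT]⟩))
    · exact Or.inr (Or.inr (Or.inr (Or.inr ⟨IsUpClosed.eq_empty_of_top_notMem hupM htop,
        hγtop.resolve_left htop, Set.subset_union_right.trans hγsub, hT⟩)))
  · have hMp : Mp ∈ gM ∪ gN := by simp [hγ]
    have hNm : Nm ∈ gM ∪ gN := by simp [hγ]
    by_cases hM : Mp ∈ gM ∨ Nm ∈ gM
    · exact Or.inr (Or.inl ⟨⟨hMp, hNm, hTtop⟩, hM⟩)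
    · obtain ⟨hMpM, hNmM⟩ := not_or.1 hM
      have hgM : gM ⊆ {top, Np} := fun p hp => by
        have hpγ : p ∈ gM ∪ gN := Or.inl hp
        cases p <;> simp [hγ, hMpM, hNmM] at hpγ hp ⊢
      refine Or.inr (Or.inr (Or.inr (Or.inl ⟨hgM,
        IsUpClosed.eq_of_Mp_mem_of_Nm_mem hupN (hMp.resolve_left hMpM) (hNm.resolve_left hNmM)
          (hγ ▸ Set.subset_union_right), hTtop, hTsub⟩)))
end
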